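/- arXiv:1703.01507 — 3 statements merged into one kernel-verified Lean document; each statement's English description precedes it below -/
import Mathlib

section
/- Let δ ∈ (0, 1/2) and suppose (x_i)_{i∈I} in ℝⁿ and (x'_i)_{i∈I} in ℝ^{n'} satisfy the (δ, n, n')-pairwise JL condition. Let k ≥ 2, let 𝔠_k be a k-optimal and 𝔠_{k−1} a (k−1)-optimal partition for (x_i), and let 𝔠'_k be a k-optimal and 𝔠'_{k−1} a (k−1)-optimal partition for (x'_i). If σ > 0 satisfies J((x_i), 𝔠_k) ≤ σ²·J((x_i), 𝔠_{k−1}) (σ-separatedness of the original data), then J((x'_i), 𝔠'_k) ≤ σ²·((1+δ)/(1−δ))·J((x'_i), 𝔠'_{k−1}); that is, the projected data is σ·√((1+δ)/(1−δ))-separated. -/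
open Finset

variable {I : Type*} [Fintype I] [DecidableEq I]

/-- Centroid of the points indexed by the finite set `C`. -/
noncomputable def centroid {E : Type*} [NormedAddCommGroup E] [NormedSpace ℝ E]
    (y : I → E) (C : Finset I) : E :=
  (C.card : ℝ)⁻¹ • ∑ i ∈ C, y i

/-- `k`-means cost `J((y_i), 𝔠) = Σ_i ‖y_i − μ_y(𝔠(i))‖²` of a partition, written
as a sum over the blocks. -/
noncomputable def kmeansCost {E : Type*} [NormedAddCommGroup E] [NormedSpace ℝ E]
    (y : I → E) (c : Finpartition (univ : Finset I)) : ℝ :=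
  ∑ C ∈ c.parts, ∑ i ∈ C, ‖y i - centroid y C‖ ^ 2

/-- Within-cluster variance `VAR((y_i), C)`. -/
noncomputable def clVar {E : Type*} [NormedAddCommGroup E] [NormedSpace ℝ E]
    (y : I → E) (C : Finset I) : ℝ :=
  (C.card : ℝ)⁻¹ * ∑ i ∈ C, ‖y i - centroid y C‖ ^ 2

/-- The `(δ, n, n')`-pairwise Johnson–Lindenstrauss condition. -/
def JLpair (n n' : ℕ) (δ : ℝ) {I : Type*} (x : I → EuclideanSpace ℝ (Fin n))
    (x' : I → EuclideanSpace ℝ (Fin n')) : Prop :=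
  ∀ i j : I, (1 - δ) * ‖x i - x j‖ ^ 2 ≤ (n : ℝ) / n' * ‖x' i - x' j‖ ^ 2 ∧
    (n : ℝ) / n' * ‖x' i - x' j‖ ^ 2 ≤ (1 + δ) * ‖x i - x j‖ ^ 2

/-- A partition of `I` into at most `k` (automatically nonempty) blocks is `k`-optimal
for the points `y` if it minimizes the k-means cost among all such partitions. -/
def kOptimal {E : Type*} [NormedAddCommGroup E] [NormedSpace ℝ E] (k : ℕ) (y : I → E)
    (c : Finpartition (univ : Finset I)) : Prop :=
  c.parts.card ≤ k ∧ ∀ d : Finpartition (univ : Finset I), d.parts.card ≤ k →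
    kmeansCost y c ≤ kmeansCost y d

/-- A partition is k-means-stable (a local minimum of the k-means algorithm) for points `y`
if every point is at least as close to its own block's centroid as to any other centroid. -/
def kmeansStable {E : Type*} [NormedAddCommGroup E] [NormedSpace ℝ E] (y : I → E)
    (c : Finpartition (univ : Finset I)) : Prop :=
  ∀ i : I, ∀ Ci ∈ c.parts, i ∈ Ci → ∀ C ∈ c.parts,
    ‖y i - centroid y Ci‖ ≤ ‖y i - centroid y C‖

/-- `p` bounds the cluster spread of `y` with respect to the partition `c`. -/
def spreadBound {E : Type*} [NormedAddCommGroup E] [NormedSpace ℝ E] (p : ℝ) (y : I → E)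
    (c : Finpartition (univ : Finset I)) : Prop :=
  ∀ C₁ ∈ c.parts, ∀ C₂ ∈ c.parts, C₁ ≠ C₂ →
    clVar y C₁ * ((C₁.card + C₂.card : ℝ) / C₂.card)
      + clVar y C₂ * ((C₁.card + C₂.card : ℝ) / C₁.card)
      ≤ p * ‖centroid y C₁ - centroid y C₂‖ ^ 2

/-! Both the `k`-means cost of a fixed partition and the optimal `k`-means cost depend on the
points only through their pairwise squared distances, since each block contributes
`(2|C|)⁻¹ Σ_{i,j ∈ C} ‖y_i − y_j‖²`. Hence the JL condition compares the cost of every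
partition in the two spaces up to the factors `1 ± δ`, and comparing an optimal partition
with the optimal partition of the other space transfers the ratio of optimal costs. -/

theorem sum_norm_sub_centroid_sq {ι E : Type*} [NormedAddCommGroup E] [InnerProductSpace ℝ E]
    (y : ι → E) (C : Finset ι) :
    ∑ i ∈ C, ‖y i - centroid y C‖ ^ 2
      = (2 * #C : ℝ)⁻¹ * ∑ i ∈ C, ∑ j ∈ C, ‖y i - y j‖ ^ 2 := by
  rcases C.eq_empty_or_nonempty with rfl | hC
  · simp
  have hm : (#C : ℝ) ≠ 0 := by exact_mod_cast hC.card_pos.ne'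
  set S := ∑ i ∈ C, y i
  have hμ : centroid y C = (#C : ℝ)⁻¹ • S := rfl
  have hpairs : ∑ i ∈ C, ∑ j ∈ C, ‖y i - y j‖ ^ 2
      = 2 * #C * ∑ i ∈ C, ‖y i‖ ^ 2 - 2 * ‖S‖ ^ 2 := by
    simp only [norm_sub_sq_real, sum_add_distrib, sum_sub_distrib, sum_const, nsmul_eq_mul,
      ← mul_sum, ← inner_sum, ← sum_inner, real_inner_self_eq_norm_sq, S]
    ring
  have hdev : ∑ i ∈ C, ‖y i - centroid y C‖ ^ 2
      = ∑ i ∈ C, ‖y i‖ ^ 2 - (#C : ℝ)⁻¹ * ‖S‖ ^ 2 := by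
    simp only [norm_sub_sq_real, hμ, real_inner_smul_right, norm_smul, sum_add_distrib,
      sum_sub_distrib, sum_const, nsmul_eq_mul, ← mul_sum, ← sum_inner,
      real_inner_self_eq_norm_sq, Real.norm_eq_abs, abs_inv, Nat.abs_cast, mul_pow, S]
    field_simp
    ring
  rw [hpairs, hdev]
  field_simp

theorem mul_kmeansCost_le_of_mul_norm_sub_sq_le {E F : Type*} [NormedAddCommGroup E] [InnerProductSpace ℝ E]
    [NormedAddCommGroup F] [InnerProductSpace ℝ F] {y : I → E} {z : I → F} {a b : ℝ}
    (h : ∀ i j, a * ‖y i - y j‖ ^ 2 ≤ b * ‖z i - z j‖ ^ 2) (c : Finpartition (univ : Finset I)) :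
    a * kmeansCost y c ≤ b * kmeansCost z c := by
  simp only [kmeansCost, mul_sum, sum_norm_sub_centroid_sq, mul_left_comm a, mul_left_comm b]
  exact sum_le_sum fun C _ => sum_le_sum fun i _ => sum_le_sum fun j _ =>
    mul_le_mul_of_nonneg_left (h i j) (by positivity)

theorem kOptimal.mul_kmeansCost_le {E F : Type*} [NormedAddCommGroup E] [InnerProductSpace ℝ E]
    [NormedAddCommGroup F] [InnerProductSpace ℝ F] {k : ℕ} {y : I → E} {z : I → F}
    {c d : Finpartition (univ : Finset I)} (hc : kOptimal k y c) (hd : #d.parts ≤ k)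
    {a b : ℝ} (ha : 0 ≤ a) (h : ∀ i j, a * ‖y i - y j‖ ^ 2 ≤ b * ‖z i - z j‖ ^ 2) :
    a * kmeansCost y c ≤ b * kmeansCost z d :=
  (mul_le_mul_of_nonneg_left (hc.2 d hd) ha).trans (mul_kmeansCost_le_of_mul_norm_sub_sq_le h d)

theorem sigma_separatedness_preserved_general {n n' : ℕ} (hn'0 : 0 < n') (hn'n : n' < n)
    {δ : ℝ} (hδ0 : 0 < δ) (hδ : δ < 1 / 2)
    {I : Type*} [Fintype I] [DecidableEq I]
    (x : I → EuclideanSpace ℝ (Fin n)) (x' : I → EuclideanSpace ℝ (Fin n'))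
    (hJL : JLpair n n' δ x x') (k : ℕ)
    (ck ck1 c'k c'k1 : Finpartition (univ : Finset I))
    (hck : kOptimal k x ck) (hck1 : kOptimal (k - 1) x ck1)
    (hc'k : kOptimal k x' c'k) (hc'k1 : kOptimal (k - 1) x' c'k1)
    (σ : ℝ)
    (hsep : kmeansCost x ck ≤ σ ^ 2 * kmeansCost x ck1) :
    kmeansCost x' c'k ≤ σ ^ 2 * ((1 + δ) / (1 - δ)) * kmeansCost x' c'k1 := by
  set r : ℝ := (n : ℝ) / n'
  have hr : 0 < r := div_pos (by exact_mod_cast hn'0.trans hn'n) (by exact_mod_cast hn'0)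
  have hδ1 : 0 < 1 - δ := by linarith
  have hupper : r * kmeansCost x' c'k ≤ (1 + δ) * kmeansCost x ck :=
    hc'k.mul_kmeansCost_le hck.1 hr.le fun i j => (hJL i j).2
  have hlower : (1 - δ) * kmeansCost x ck1 ≤ r * kmeansCost x' c'k1 :=
    hck1.mul_kmeansCost_le hc'k1.1 hδ1.le fun i j => (hJL i j).1
  have hscaled : r * ((1 - δ) * kmeansCost x' c'k) ≤ r * ((1 + δ) * σ ^ 2 * kmeansCost x' c'k1) :=
    calc r * ((1 - δ) * kmeansCost x' c'k)
        = (1 - δ) * (r * kmeansCost x' c'k) := by ring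
      _ ≤ (1 - δ) * ((1 + δ) * (σ ^ 2 * kmeansCost x ck1)) :=
          mul_le_mul_of_nonneg_left (hupper.trans (by gcongr)) hδ1.le
      _ = (1 + δ) * σ ^ 2 * ((1 - δ) * kmeansCost x ck1) := by ring
      _ ≤ (1 + δ) * σ ^ 2 * (r * kmeansCost x' c'k1) := by gcongr
      _ = r * ((1 + δ) * σ ^ 2 * kmeansCost x' c'k1) := by ring
  rw [mul_div_assoc', div_mul_eq_mul_div, le_div_iff₀ hδ1]
  linarith [le_of_mul_le_mul_left hscaled hr]

/-- σ-separatedness is transmitted to the projected space, weakened by the factor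
`√((1+δ)/(1−δ))`. -/
theorem sigma_separatedness_preserved {n n' : ℕ} (hn'0 : 0 < n') (hn'n : n' < n)
    {δ : ℝ} (hδ0 : 0 < δ) (hδ : δ < 1 / 2)
    {I : Type*} [Fintype I] [DecidableEq I]
    (x : I → EuclideanSpace ℝ (Fin n)) (x' : I → EuclideanSpace ℝ (Fin n'))
    (hJL : JLpair n n' δ x x') (k : ℕ) (hk : 2 ≤ k)
    (ck ck1 c'k c'k1 : Finpartition (univ : Finset I))
    (hck : kOptimal k x ck) (hck1 : kOptimal (k - 1) x ck1)
    (hc'k : kOptimal k x' c'k) (hc'k1 : kOptimal (k - 1) x' c'k1)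
    (σ : ℝ) (hσ : 0 < σ)
    (hsep : kmeansCost x ck ≤ σ ^ 2 * kmeansCost x ck1) :
    kmeansCost x' c'k ≤ σ ^ 2 * ((1 + δ) / (1 - δ)) * kmeansCost x' c'k1 :=
  sigma_separatedness_preserved_general hn'0 hn'n hδ0 hδ x x' hJL k ck ck1 c'k c'k1 hck hck1 hc'k
    hc'k1 σ hsep
end

section
/- Let δ ∈ (0, 1/2) and suppose (x_i)_{i∈I} in ℝⁿ and (x'_i)_{i∈I} in ℝ^{n'} satisfy the (δ, n, n')-pairwise JL condition. Let β > 0 and let 𝔠_o be a partition of I into exactly k nonempty blocks that is k-optimal both for (x_i) and for (x'_i) (as is guaranteed when the squared distances of (x_i) have the √s-multiplicative-perturbation-robustness property with s ≤ 1−δ). Suppose (x_i) has (1+β)-weak deletion stability with respect to 𝔠_o: for every partition 𝔠 obtained from 𝔠_o by replacing two distinct blocks C_r and C_t by their union C_r ∪ C_t (and keeping all other blocks), J((x_i), 𝔠) ≥ (1+β)·J((x_i), 𝔠_o). Then for every such merged partition 𝔠: J((x'_i), 𝔠) ≥ (1+β)·((1−δ)/(1+δ))·J((x'_i), 𝔠_o);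 that is, the projected data has (1+β)·(1−δ)/(1+δ)-weak deletion stability. -/
open Finset

variable {I : Type*} [Fintype I] [DecidableEq I]

/-! Within one block, the k-means cost equals `(2|C|)⁻¹ Σ_{i,j ∈ C} ‖y_i − y_j‖²`, so it depends
only on pairwise squared distances. The JL condition therefore sandwiches `(n/n') J(x', 𝔠)`
between `(1 ∓ δ) J(x, 𝔠)` for every partition `𝔠`, and the stability inequality for `x`
transfers to `x'` at the price of the factor `(1 − δ)/(1 + δ)`. -/

section KMeans

variable {ι : Type*} {E F : Type*}

lemma sum_sub_centroid_eq_zero [NormedAddCommGroup E] [NormedSpace ℝ E]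
    (y : ι → E) {C : Finset ι} (hC : C.Nonempty) :
    ∑ i ∈ C, (y i - centroid y C) = 0 := by
  rw [sum_sub_distrib, sum_const, ← Nat.cast_smul_eq_nsmul ℝ, _root_.centroid, smul_smul,
    mul_inv_cancel₀ (by positivity), one_smul, sub_self]

lemma sum_sum_norm_sub_sq_eq [NormedAddCommGroup E] [InnerProductSpace ℝ E]
    (y : ι → E) (C : Finset ι) :
    ∑ i ∈ C, ∑ j ∈ C, ‖y i - y j‖ ^ 2
      = 2 * #C * ∑ i ∈ C, ‖y i - centroid y C‖ ^ 2 := by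
  rcases C.eq_empty_or_nonempty with rfl | hC
  · simp
  set μ := centroid y C
  have hrow : ∀ i, ∑ j ∈ C, ‖y i - y j‖ ^ 2
      = #C * ‖y i - μ‖ ^ 2 + ∑ j ∈ C, ‖y j - μ‖ ^ 2 := by
    intro i
    have hsplit : ∀ j, ‖y i - y j‖ ^ 2
        = ‖y i - μ‖ ^ 2 - 2 * inner ℝ (y i - μ) (y j - μ) + ‖y j - μ‖ ^ 2 := by
      intro j
      rw [← norm_sub_sq_real, sub_sub_sub_cancel_right]
    rw [sum_congr rfl fun j _ => hsplit j, sum_add_distrib, sum_sub_distrib, ← mul_sum,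
      ← inner_sum, sum_sub_centroid_eq_zero y hC, inner_zero_right, mul_zero, sub_zero, sum_const,
      nsmul_eq_mul]
  simp_rw [hrow, sum_add_distrib, ← mul_sum, sum_const, nsmul_eq_mul]
  ring

lemma sum_norm_sub_centroid_sq_eq [NormedAddCommGroup E] [InnerProductSpace ℝ E]
    (y : ι → E) (C : Finset ι) :
    ∑ i ∈ C, ‖y i - centroid y C‖ ^ 2
      = (2 * #C : ℝ)⁻¹ * ∑ i ∈ C, ∑ j ∈ C, ‖y i - y j‖ ^ 2 := by
  rcases C.eq_empty_or_nonempty with rfl | hC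
  · simp
  rw [sum_sum_norm_sub_sq_eq, ← mul_assoc, inv_mul_cancel₀ (by positivity), one_mul]

variable [NormedAddCommGroup E] [InnerProductSpace ℝ E]
  [NormedAddCommGroup F] [InnerProductSpace ℝ F]

lemma mul_sum_norm_sub_centroid_sq_le_of_pairwise {y : ι → E} {z : ι → F} {a b : ℝ}
    (h : ∀ i j, a * ‖y i - y j‖ ^ 2 ≤ b * ‖z i - z j‖ ^ 2) (C : Finset ι) :
    a * ∑ i ∈ C, ‖y i - centroid y C‖ ^ 2 ≤ b * ∑ i ∈ C, ‖z i - centroid z C‖ ^ 2 := by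
  have hpairs : a * ∑ i ∈ C, ∑ j ∈ C, ‖y i - y j‖ ^ 2
      ≤ b * ∑ i ∈ C, ∑ j ∈ C, ‖z i - z j‖ ^ 2 := by
    simp_rw [mul_sum]
    exact sum_le_sum fun i _ => sum_le_sum fun j _ => h i j
  rw [sum_norm_sub_centroid_sq_eq, sum_norm_sub_centroid_sq_eq, mul_left_comm,
    mul_left_comm b]
  gcongr

lemma mul_kmeansCost_le_of_pairwise [Fintype ι] [DecidableEq ι]
    {y : ι → E} {z : ι → F} {a b : ℝ}
    (h : ∀ i j, a * ‖y i - y j‖ ^ 2 ≤ b * ‖z i - z j‖ ^ 2)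
    (c : Finpartition (univ : Finset ι)) :
    a * kmeansCost y c ≤ b * kmeansCost z c := by
  rw [kmeansCost, kmeansCost, mul_sum, mul_sum]
  exact sum_le_sum fun C _ => mul_sum_norm_sub_centroid_sq_le_of_pairwise h C

end KMeans

theorem weak_deletion_stability_preserved_general {n n' : ℕ} (hn'0 : 0 < n') (hn'n : n' < n)
    {δ : ℝ} (hδ0 : 0 < δ) (hδ : δ < 1 / 2)
    {I : Type*} [Fintype I] [DecidableEq I]
    (x : I → EuclideanSpace ℝ (Fin n)) (x' : I → EuclideanSpace ℝ (Fin n'))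
    (hJL : JLpair n n' δ x x') (β : ℝ) (hβ : 0 < β)
    (co : Finpartition (univ : Finset I))
    (hstab : ∀ (c : Finpartition (univ : Finset I)) (Cr Ct : Finset I),
      Cr ∈ co.parts → Ct ∈ co.parts → Cr ≠ Ct →
      c.parts = insert (Cr ∪ Ct) ((co.parts.erase Cr).erase Ct) →
      (1 + β) * kmeansCost x co ≤ kmeansCost x c) :
    ∀ (c : Finpartition (univ : Finset I)) (Cr Ct : Finset I),
      Cr ∈ co.parts → Ct ∈ co.parts → Cr ≠ Ct →
      c.parts = insert (Cr ∪ Ct) ((co.parts.erase Cr).erase Ct) →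
      (1 + β) * ((1 - δ) / (1 + δ)) * kmeansCost x' co ≤ kmeansCost x' c := by
  intro c Cr Ct hCr hCt hne hparts
  set r : ℝ := n / n'
  have hr : 0 < r := div_pos (by exact_mod_cast hn'0.trans hn'n) (by exact_mod_cast hn'0)
  have hlower := mul_kmeansCost_le_of_pairwise (fun i j => (hJL i j).1) c
  have hupper := mul_kmeansCost_le_of_pairwise (fun i j => (hJL i j).2) co
  have hmerge := hstab c Cr Ct hCr hCt hne hparts
  have hβδ : 0 ≤ (1 + β) * (1 - δ) := by nlinarith
  have hδδ : 0 ≤ (1 - δ) * (1 + δ) := by nlinarith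
  have key : r * ((1 + β) * (1 - δ) * kmeansCost x' co) ≤ r * ((1 + δ) * kmeansCost x' c) :=
    calc r * ((1 + β) * (1 - δ) * kmeansCost x' co)
        = (1 + β) * (1 - δ) * (r * kmeansCost x' co) := by ring
      _ ≤ (1 + β) * (1 - δ) * ((1 + δ) * kmeansCost x co) := by gcongr
      _ = (1 - δ) * (1 + δ) * ((1 + β) * kmeansCost x co) := by ring
      _ ≤ (1 - δ) * (1 + δ) * kmeansCost x c := by gcongr
      _ = (1 + δ) * ((1 - δ) * kmeansCost x c) := by ring
      _ ≤ (1 + δ) * (r * kmeansCost x' c) := by gcongr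
      _ = r * ((1 + δ) * kmeansCost x' c) := by ring
  calc (1 + β) * ((1 - δ) / (1 + δ)) * kmeansCost x' co
      = (1 + β) * (1 - δ) * kmeansCost x' co / (1 + δ) := by ring
    _ ≤ kmeansCost x' c := by
      rw [div_le_iff₀ (by linarith), mul_comm _ (1 + δ)]
      exact le_of_mul_le_mul_left key hr

/-- (1+β)-weak deletion stability is transmitted to the projected space, with the factor
weakened to `(1+β)·(1−δ)/(1+δ)`, for a partition which is optimal in both spaces. -/
theorem weak_deletion_stability_preserved {n n' : ℕ} (hn'0 : 0 < n') (hn'n : n' < n)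
    {δ : ℝ} (hδ0 : 0 < δ) (hδ : δ < 1 / 2)
    {I : Type*} [Fintype I] [DecidableEq I]
    (x : I → EuclideanSpace ℝ (Fin n)) (x' : I → EuclideanSpace ℝ (Fin n'))
    (hJL : JLpair n n' δ x x') (k : ℕ) (β : ℝ) (hβ : 0 < β)
    (co : Finpartition (univ : Finset I)) (hcard : co.parts.card = k)
    (hopt : kOptimal k x co) (hopt' : kOptimal k x' co)
    (hstab : ∀ (c : Finpartition (univ : Finset I)) (Cr Ct : Finset I),
      Cr ∈ co.parts → Ct ∈ co.parts → Cr ≠ Ct →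
      c.parts = insert (Cr ∪ Ct) ((co.parts.erase Cr).erase Ct) →
      (1 + β) * kmeansCost x co ≤ kmeansCost x c) :
    ∀ (c : Finpartition (univ : Finset I)) (Cr Ct : Finset I),
      Cr ∈ co.parts → Ct ∈ co.parts → Cr ≠ Ct →
      c.parts = insert (Cr ∪ Ct) ((co.parts.erase Cr).erase Ct) →
      (1 + β) * ((1 - δ) / (1 + δ)) * kmeansCost x' co ≤ kmeansCost x' c :=
  weak_deletion_stability_preserved_general hn'0 hn'n hδ0 hδ x x' hJL β hβ co hstab
end

section
/- Let δ ∈ (0, 1/2) and suppose (x_i)_{i∈I} in ℝⁿ and (x'_i)_{i∈I} in ℝ^{n'} satisfy the (δ, n, n')-pairwise JL condition. Let C₁, C₂ ⊆ I be disjoint nonempty sets with m₁ = |C₁|, m₂ = |C₂|, m₁₂ = m₁+m₂, with μ_x(C₁) ≠ μ_x(C₂), and let p > 0 satisfy VAR((x_i),C₁)·m₁₂/m₂ + VAR((x_i),C₂)·m₁₂/m₁ ≤ p·‖μ_x(C₁) − μ_x(C₂)‖². Then (1 − δ(1+2p))·‖μ_x(C₁) − μ_x(C₂)‖² ≤ (n/n')·‖μ_{x'}(C₁)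 − μ_{x'}(C₂)‖² ≤ (1 + δ(1+2p))·‖μ_x(C₁) − μ_x(C₂)‖². -/
open Finset

variable {I : Type*} [Fintype I] [DecidableEq I]

/-!
Expanding `‖x_i − x_j‖²` around the two centroids gives, for clusters `A`, `B`,
`Σ_{i∈A} Σ_{j∈B} ‖x_i − x_j‖² = |A|·|B|·(VAR(A) + VAR(B) + ‖μ(A) − μ(B)‖²)`,
so averaging the pairwise JL condition over `A × B` transfers the `1 ± δ` distortion to the
right-hand side. Taking `A = B = C₁` and `A = B = C₂` controls the variances alone, and
subtracting isolates the centre distance, at the cost of an error `2δ·(VAR(C₁) + VAR(C₂))`,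
which the spread hypothesis bounds by `2δp·‖μ(C₁) − μ(C₂)‖²`.
-/

open Finset RealInnerProductSpace

section InnerProductSpace

variable {ι E : Type*} [NormedAddCommGroup E] [InnerProductSpace ℝ E]

-- No nonemptiness is needed: for `C = ∅` the junk value `0⁻¹ = 0` makes both sides vanish.
lemma card_smul_centroid (y : ι → E) (C : Finset ι) :
    (C.card : ℝ) • centroid y C = ∑ i ∈ C, y i := by
  rcases C.eq_empty_or_nonempty with rfl | hC
  · simp
  · rw [_root_.centroid, smul_smul, mul_inv_cancel₀ (by exact_mod_cast hC.card_pos.ne'), one_smul]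

lemma card_mul_clVar (y : ι → E) (C : Finset ι) :
    (C.card : ℝ) * clVar y C = ∑ i ∈ C, ‖y i - centroid y C‖ ^ 2 := by
  rcases C.eq_empty_or_nonempty with rfl | hC
  · simp
  · rw [clVar, mul_inv_cancel_left₀ (by exact_mod_cast hC.card_pos.ne')]

lemma clVar_nonneg (y : ι → E) (C : Finset ι) : 0 ≤ clVar y C :=
  mul_nonneg (by positivity) (sum_nonneg fun _ _ => by positivity)

lemma sum_sub_centroid (y : ι → E) (C : Finset ι) : ∑ i ∈ C, (y i - centroid y C) = 0 := by
  rw [sum_sub_distrib, sum_const, ← Nat.cast_smul_eq_nsmul ℝ, card_smul_centroid, sub_self]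

/-- König–Huygens. -/
lemma sum_norm_sub_sq (y : ι → E) (C : Finset ι) (z : E) :
    ∑ i ∈ C, ‖y i - z‖ ^ 2 = C.card * (clVar y C + ‖centroid y C - z‖ ^ 2) := by
  set μ := centroid y C
  calc ∑ i ∈ C, ‖y i - z‖ ^ 2
      = ∑ i ∈ C, (‖y i - μ‖ ^ 2 + 2 * ⟪y i - μ, μ - z⟫ + ‖μ - z‖ ^ 2) :=
        sum_congr rfl fun i _ => by rw [← norm_add_sq_real, sub_add_sub_cancel]
    _ = ∑ i ∈ C, ‖y i - μ‖ ^ 2 + 2 * ⟪∑ i ∈ C, (y i - μ), μ - z⟫ + C.card * ‖μ - z‖ ^ 2 := by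
        rw [sum_add_distrib, sum_add_distrib, ← mul_sum, sum_inner, sum_const, nsmul_eq_mul]
    _ = C.card * (clVar y C + ‖μ - z‖ ^ 2) := by
        rw [sum_sub_centroid, inner_zero_left, ← card_mul_clVar]
        ring

lemma sum_sum_norm_sub_sq (y : ι → E) (A B : Finset ι) :
    ∑ i ∈ A, ∑ j ∈ B, ‖y i - y j‖ ^ 2 =
      A.card * B.card * (clVar y A + clVar y B + ‖centroid y A - centroid y B‖ ^ 2) := by
  calc ∑ i ∈ A, ∑ j ∈ B, ‖y i - y j‖ ^ 2
      = ∑ j ∈ B, A.card * (clVar y A + ‖y j - centroid y A‖ ^ 2) := by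
        rw [sum_comm]
        refine sum_congr rfl fun j _ => ?_
        rw [sum_norm_sub_sq, norm_sub_rev]
    _ = A.card * (B.card * clVar y A + ∑ j ∈ B, ‖y j - centroid y A‖ ^ 2) := by
        rw [← mul_sum, sum_add_distrib, sum_const, nsmul_eq_mul]
    _ = A.card * B.card * (clVar y A + clVar y B + ‖centroid y A - centroid y B‖ ^ 2) := by
        rw [sum_norm_sub_sq, norm_sub_rev]
        ring

lemma clVar_add_clVar_le {C₁ C₂ : Finset ι} (h₁ : C₁.Nonempty) (h₂ : C₂.Nonempty) {y : ι → E}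
    {b : ℝ} (hspread : clVar y C₁ * ((C₁.card + C₂.card : ℝ) / C₂.card)
        + clVar y C₂ * ((C₁.card + C₂.card : ℝ) / C₁.card) ≤ b) :
    clVar y C₁ + clVar y C₂ ≤ b := by
  have hm₁ : (0 : ℝ) < C₁.card := by exact_mod_cast h₁.card_pos
  have hm₂ : (0 : ℝ) < C₂.card := by exact_mod_cast h₂.card_pos
  have hweight₁ : 1 ≤ (C₁.card + C₂.card : ℝ) / C₂.card := by
    rw [one_le_div hm₂]; linarith
  have hweight₂ : 1 ≤ (C₁.card + C₂.card : ℝ) / C₁.card := by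
    rw [one_le_div hm₁]; linarith
  nlinarith [clVar_nonneg y C₁, clVar_nonneg y C₂]

end InnerProductSpace

namespace JLpair

variable {ι : Type*} {n n' : ℕ} {δ : ℝ} {x : ι → EuclideanSpace ℝ (Fin n)}
  {x' : ι → EuclideanSpace ℝ (Fin n')}

lemma sum_sum_bounds (hJL : JLpair n n' δ x x') (A B : Finset ι) :
    (1 - δ) * ∑ i ∈ A, ∑ j ∈ B, ‖x i - x j‖ ^ 2 ≤
        (n : ℝ) / n' * ∑ i ∈ A, ∑ j ∈ B, ‖x' i - x' j‖ ^ 2 ∧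
      (n : ℝ) / n' * ∑ i ∈ A, ∑ j ∈ B, ‖x' i - x' j‖ ^ 2 ≤
        (1 + δ) * ∑ i ∈ A, ∑ j ∈ B, ‖x i - x j‖ ^ 2 := by
  simp only [mul_sum]
  exact ⟨sum_le_sum fun i _ => sum_le_sum fun j _ => (hJL i j).1,
    sum_le_sum fun i _ => sum_le_sum fun j _ => (hJL i j).2⟩

lemma clVar_add_clVar_add_dist_bounds (hJL : JLpair n n' δ x x') {A B : Finset ι}
    (hA : A.Nonempty) (hB : B.Nonempty) :
    (1 - δ) * (clVar x A + clVar x B + ‖centroid x A - centroid x B‖ ^ 2) ≤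
        (n : ℝ) / n' * (clVar x' A + clVar x' B + ‖centroid x' A - centroid x' B‖ ^ 2) ∧
      (n : ℝ) / n' * (clVar x' A + clVar x' B + ‖centroid x' A - centroid x' B‖ ^ 2) ≤
        (1 + δ) * (clVar x A + clVar x B + ‖centroid x A - centroid x B‖ ^ 2) := by
  have hcard : (0 : ℝ) < A.card * B.card := by
    have := hA.card_pos; have := hB.card_pos; positivity
  obtain ⟨hlo, hhi⟩ := hJL.sum_sum_bounds A B
  rw [sum_sum_norm_sub_sq, sum_sum_norm_sub_sq] at hlo hhi
  exact ⟨le_of_mul_le_mul_left (by linarith) hcard, le_of_mul_le_mul_left (by linarith) hcard⟩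

lemma clVar_bounds (hJL : JLpair n n' δ x x') {C : Finset ι} (hC : C.Nonempty) :
    (1 - δ) * clVar x C ≤ (n : ℝ) / n' * clVar x' C ∧
      (n : ℝ) / n' * clVar x' C ≤ (1 + δ) * clVar x C := by
  have h := hJL.clVar_add_clVar_add_dist_bounds hC hC
  simp only [sub_self, norm_zero] at h
  constructor <;> linarith [h.1, h.2]

end JLpair

theorem centre_distance_preserved_general {n n' : ℕ}
    {δ : ℝ} (hδ0 : 0 < δ)
    {I : Type*}
    (x : I → EuclideanSpace ℝ (Fin n)) (x' : I → EuclideanSpace ℝ (Fin n'))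
    (hJL : JLpair n n' δ x x')
    (C₁ C₂ : Finset I) (h₁ : C₁.Nonempty) (h₂ : C₂.Nonempty) (p : ℝ)
    (hspread : clVar x C₁ * ((C₁.card + C₂.card : ℝ) / C₂.card)
        + clVar x C₂ * ((C₁.card + C₂.card : ℝ) / C₁.card)
      ≤ p * ‖centroid x C₁ - centroid x C₂‖ ^ 2) :
    (1 - δ * (1 + 2 * p)) * ‖centroid x C₁ - centroid x C₂‖ ^ 2 ≤
        (n : ℝ) / n' * ‖centroid x' C₁ - centroid x' C₂‖ ^ 2 ∧
    (n : ℝ) / n' * ‖centroid x' C₁ - centroid x' C₂‖ ^ 2 ≤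
        (1 + δ * (1 + 2 * p)) * ‖centroid x C₁ - centroid x C₂‖ ^ 2 := by
  obtain ⟨hlo, hhi⟩ := hJL.clVar_add_clVar_add_dist_bounds h₁ h₂
  obtain ⟨hlo₁, hhi₁⟩ := hJL.clVar_bounds h₁
  obtain ⟨hlo₂, hhi₂⟩ := hJL.clVar_bounds h₂
  have herror := mul_le_mul_of_nonneg_left (clVar_add_clVar_le h₁ h₂ hspread) hδ0.le
  constructor <;> linarith

/-- Distances between cluster centres are preserved up to `1 ± δ(1+2p)` under a JL
projection. -/
theorem centre_distance_preserved {n n' : ℕ} (hn'0 : 0 < n') (hn'n : n' < n)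
    {δ : ℝ} (hδ0 : 0 < δ) (hδ : δ < 1 / 2)
    {I : Type*} [Fintype I] [DecidableEq I]
    (x : I → EuclideanSpace ℝ (Fin n)) (x' : I → EuclideanSpace ℝ (Fin n'))
    (hJL : JLpair n n' δ x x')
    (C₁ C₂ : Finset I) (h₁ : C₁.Nonempty) (h₂ : C₂.Nonempty) (hdisj : Disjoint C₁ C₂)
    (hμ : centroid x C₁ ≠ centroid x C₂) (p : ℝ) (hp : 0 < p)
    (hspread : clVar x C₁ * ((C₁.card + C₂.card : ℝ) / C₂.card)
        + clVar x C₂ * ((C₁.card + C₂.card : ℝ) / C₁.card)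
      ≤ p * ‖centroid x C₁ - centroid x C₂‖ ^ 2) :
    (1 - δ * (1 + 2 * p)) * ‖centroid x C₁ - centroid x C₂‖ ^ 2 ≤
        (n : ℝ) / n' * ‖centroid x' C₁ - centroid x' C₂‖ ^ 2 ∧
    (n : ℝ) / n' * ‖centroid x' C₁ - centroid x' C₂‖ ^ 2 ≤
        (1 + δ * (1 + 2 * p)) * ‖centroid x C₁ - centroid x C₂‖ ^ 2 :=
  centre_distance_preserved_general hδ0 x x' hJL C₁ C₂ h₁ h₂ p hspread
end
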